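/- For the (r × r)-dimensional torus C_r □ C_r with r even, both the isometric path cover number and the isometric path partition number equal r. -/

import Mathlib

open SimpleGraph

/-- `s` is the vertex set of an isometric (shortest) path in `G`. -/
def IsIsoPathSet {V : Type*} (G : SimpleGraph V) (s : Set V) : Prop :=
  ∃ (u v : V) (p : G.Walk u v), p.IsPath ∧ p.length = G.dist u v ∧ s = {x | x ∈ p.support}

/-- The isometric path cover number. -/
noncomputable def ipCover {V : Type*} (G : SimpleGraph V) : ℕ :=
  sInf {n | ∃ f : Fin n → Set V, (∀ i, IsIsoPathSet G (f i)) ∧ (⋃ i, f i) = Set.univ}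

/-- The isometric path partition number. -/
noncomputable def ipPartition {V : Type*} (G : SimpleGraph V) : ℕ :=
  sInf {n | ∃ f : Fin n → Set V, (∀ i, IsIsoPathSet G (f i)) ∧ (⋃ i, f i) = Set.univ ∧
    Pairwise (Function.onFun Disjoint f)}

/-!
An isometric path in `C_r □ C_r` has at most `diam + 1 = r + 1` vertices, so covering the `r²`
vertices takes at least `r` of them. Conversely, for `r = 2k + 2` the staircase
`(a, b), (a + 1, b), (a + 1, b + 1), …` with `r` vertices ends at `(a + k + 1, b + k)`; distances
in a box product add over the factors, so it is isometric. In the coordinates `(x - y, y)` it fills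
a `2 × (k + 1)` box, and `r` such boxes tile the torus.
-/

open Function Set

section General

variable {V : Type*} {G : SimpleGraph V}

namespace SimpleGraph

def seqWalk (f : ℕ → V) (hf : ∀ j, G.Adj (f j) (f (j + 1))) :
    (ℓ : ℕ) → G.Walk (f 0) (f ℓ)
  | 0 => Walk.nil
  | ℓ + 1 => (seqWalk f hf ℓ).concat (hf ℓ)

variable {f : ℕ → V} (hf : ∀ j, G.Adj (f j) (f (j + 1)))

@[simp]
lemma length_seqWalk (ℓ : ℕ) : (seqWalk f hf ℓ).length = ℓ := by
  induction ℓ with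
  | zero => rfl
  | succ ℓ ih => simp [seqWalk, ih]

lemma mem_support_seqWalk {ℓ : ℕ} {x : V} :
    x ∈ (seqWalk f hf ℓ).support ↔ ∃ j ≤ ℓ, f j = x := by
  induction ℓ with
  | zero => simp [seqWalk, eq_comm]
  | succ ℓ ih =>
    simp only [seqWalk, Walk.support_concat, List.mem_append, ih, List.mem_singleton]
    constructor
    · rintro (⟨j, hj, rfl⟩ | rfl)
      exacts [⟨j, by omega, rfl⟩, ⟨ℓ + 1, le_rfl, rfl⟩]
    · rintro ⟨j, hj, rfl⟩
      rcases Nat.lt_or_eq_of_le hj with hj | rfl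
      exacts [Or.inl ⟨j, by omega, rfl⟩, Or.inr rfl]

lemma Connected.le_add_dist (hG : G.Connected) {φ : V → ℕ}
    (hφ : ∀ u w, G.Adj u w → φ u ≤ φ w + 1) (u v : V) : φ u ≤ φ v + G.dist u v := by
  obtain ⟨p, hp⟩ := hG.exists_walk_length_eq_dist u v
  rw [← hp]
  clear hp
  induction p with
  | nil => simp
  | cons h p ih => have := hφ _ _ h; rw [Walk.length_cons]; omega

lemma Connected.dist_boxProd {W : Type*} {H : SimpleGraph W} (hG : G.Connected)
    (hH : H.Connected) (x y : V × W) :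
    (G □ H).dist x y = G.dist x.1 y.1 + H.dist x.2 y.2 := by
  have h := edist_boxProd (G := G) (H := H) x y
  rw [← ((hG.boxProd hH).preconnected x y).coe_dist_eq_edist,
    ← (hG.preconnected x.1 y.1).coe_dist_eq_edist,
    ← (hH.preconnected x.2 y.2).coe_dist_eq_edist] at h
  exact_mod_cast h

end SimpleGraph

lemma isIsoPathSet_singleton (v : V) : IsIsoPathSet G {v} :=
  ⟨v, v, Walk.nil, Walk.IsPath.nil, by simp, by ext; simp⟩

lemma isIsoPathSet_range_of_le_dist {f : ℕ → V} (hf : ∀ j, G.Adj (f j) (f (j + 1)))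
    {ℓ : ℕ} (hℓ : ℓ ≤ G.dist (f 0) (f ℓ)) :
    IsIsoPathSet G (range fun j : Fin (ℓ + 1) => f j) := by
  have hlen : (seqWalk f hf ℓ).length = G.dist (f 0) (f ℓ) :=
    le_antisymm (by simpa using hℓ) (dist_le _)
  refine ⟨_, _, seqWalk f hf ℓ, Walk.isPath_of_length_eq_dist _ hlen, hlen, ?_⟩
  ext x
  simp [mem_support_seqWalk, Fin.exists_iff]

lemma IsIsoPathSet.ncard_le {s : Set V} (hs : IsIsoPathSet G s) {D : ℕ}
    (hD : ∀ u v, G.dist u v ≤ D) : s.ncard ≤ D + 1 := by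
  classical
  obtain ⟨u, v, p, -, hp, rfl⟩ := hs
  calc {x | x ∈ p.support}.ncard = p.support.toFinset.card := by
        rw [← Set.ncard_coe_finset]; congr; ext; simp
    _ ≤ p.support.length := List.toFinset_card_le _
    _ = p.length + 1 := p.length_support
    _ ≤ D + 1 := by have := hD u v; omega

lemma exists_isoPath_partition [Finite V] : ∃ n, ∃ f : Fin n → Set V,
    (∀ i, IsIsoPathSet G (f i)) ∧ (⋃ i, f i) = univ ∧ Pairwise (Disjoint on f) := by
  obtain ⟨n, ⟨e⟩⟩ := Finite.exists_equiv_fin V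
  refine ⟨n, fun i => {e.symm i}, fun i => isIsoPathSet_singleton _, ?_, ?_⟩
  · exact eq_univ_of_forall fun v => mem_iUnion.2 ⟨e v, by simp⟩
  · exact fun i j hij => disjoint_singleton.2 (e.symm.injective.ne hij)

lemma ipCover_le_ipPartition [Finite V] : ipCover G ≤ ipPartition G := by
  obtain ⟨f, hf, hU, -⟩ := Nat.sInf_mem (exists_isoPath_partition (G := G))
  exact Nat.sInf_le ⟨f, hf, hU⟩

lemma card_le_ipCover_mul [Fintype V] {D : ℕ} (hD : ∀ u v, G.dist u v ≤ D) :
    Fintype.card V ≤ ipCover G * (D + 1) := by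
  obtain ⟨n, f, hf, hU, -⟩ := exists_isoPath_partition (G := G)
  obtain ⟨g, hg, hgU⟩ : ipCover G ∈ {m | ∃ g : Fin m → Set V,
      (∀ i, IsIsoPathSet G (g i)) ∧ (⋃ i, g i) = univ} := Nat.sInf_mem ⟨n, f, hf, hU⟩
  calc Fintype.card V = (⋃ i, g i).ncard := by rw [hgU, ncard_univ, Nat.card_eq_fintype_card]
    _ ≤ ∑ i, (g i).ncard := ncard_iUnion_le_of_fintype g
    _ ≤ ∑ _i : Fin (ipCover G), (D + 1) := Finset.sum_le_sum fun i _ => (hg i).ncard_le hD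
    _ = ipCover G * (D + 1) := by simp

lemma ipPartition_le_card {ι : Type*} [Fintype ι] (f : ι → Set V)
    (hf : ∀ i, IsIsoPathSet G (f i)) (hU : (⋃ i, f i) = univ) (hd : Pairwise (Disjoint on f)) :
    ipPartition G ≤ Fintype.card ι := by
  let e := Fintype.equivFin ι
  refine Nat.sInf_le ⟨f ∘ e.symm, fun i => hf _, ?_, hd.comp_of_injective e.symm.injective⟩
  rw [← hU]
  exact e.symm.surjective.iUnion_comp f

end General

lemma Function.Surjective.iUnion_range_curry_eq_univ {ι κ α : Type*} {Ψ : ι × κ → α}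
    (hΨ : Surjective Ψ) :
    (⋃ i, range (curry Ψ i)) = univ :=
  eq_univ_of_forall fun x =>
    let ⟨⟨i, j⟩, hx⟩ := hΨ x
    mem_iUnion.2 ⟨i, j, hx⟩

lemma Function.Injective.pairwise_disjoint_range_curry {ι κ α : Type*} {Ψ : ι × κ → α}
    (hΨ : Injective Ψ) :
    Pairwise (Disjoint on fun i => range (curry Ψ i)) := by
  rintro i i' hii'
  refine disjoint_left.2 ?_
  rintro _ ⟨j, rfl⟩ ⟨j', hj'⟩
  exact hii' (congrArg Prod.fst (hΨ hj')).symm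

lemma Fin.val_sub_eq_ite {m : ℕ} (a b : Fin m) :
    (a - b).val = if b.val ≤ a.val then a.val - b.val else m + a.val - b.val := by
  split_ifs with h
  · exact Fin.sub_val_of_le h
  · exact Fin.coe_sub_iff_lt.2 (by omega)

section Cycle

open Fin.CommRing

variable {n : ℕ}

lemma cycleGraph_adj_add_one (a : Fin (n + 2)) : (cycleGraph (n + 2)).Adj a (a + 1) :=
  cycleGraph_adj.2 (Or.inr (by ring))

lemma cycleGraph_dist_add_natCast_le (a : Fin (n + 2)) (k : ℕ) :
    (cycleGraph (n + 2)).dist a (a + (k : Fin (n + 2))) ≤ k := by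
  have hf (j : ℕ) : (cycleGraph (n + 2)).Adj (a + (j : Fin (n + 2)))
      (a + ((j + 1 : ℕ) : Fin (n + 2))) := by
    simpa [add_assoc] using cycleGraph_adj_add_one (a + (j : Fin (n + 2)))
  simpa using dist_le (seqWalk _ hf k)

lemma cycleGraph_dist_le_val_sub (a b : Fin (n + 2)) :
    (cycleGraph (n + 2)).dist a b ≤ (b - a).val := by
  simpa using cycleGraph_dist_add_natCast_le a (b - a).val

lemma cycleGraph_dist (a b : Fin (n + 2)) :
    (cycleGraph (n + 2)).dist a b = min (a - b).val (b - a).val := by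
  refine le_antisymm (le_min ?_ (cycleGraph_dist_le_val_sub a b)) ?_
  · rw [dist_comm]; exact cycleGraph_dist_le_val_sub b a
  · have hφ (u w : Fin (n + 2)) (h : (cycleGraph (n + 2)).Adj u w) :
        min (u - b).val (b - u).val ≤ min (w - b).val (b - w).val + 1 := by
      rw [cycleGraph_adj'] at h
      simp only [Fin.val_sub_eq_ite] at h ⊢
      split_ifs at h ⊢ <;> omega
    simpa using cycleGraph_connected.le_add_dist hφ a b

lemma cycleGraph_dist_le_half (a b : Fin (n + 2)) :
    (cycleGraph (n + 2)).dist a b ≤ (n + 2) / 2 := by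
  rw [cycleGraph_dist]
  simp only [Fin.val_sub_eq_ite]
  split_ifs <;> omega

lemma cycleGraph_dist_add_natCast (a : Fin (n + 2)) {k : ℕ} (hk : 2 * k ≤ n + 2) :
    (cycleGraph (n + 2)).dist a (a + (k : Fin (n + 2))) = k := by
  have hval : (k : Fin (n + 2)).val = k := by rw [Fin.val_natCast, Nat.mod_eq_of_lt (by omega)]
  rw [cycleGraph_dist, show a - (a + k) = -k by ring, add_sub_cancel_left, Fin.val_neg, hval]
  split_ifs with h
  · rw [h, Fin.val_zero] at hval
    omega
  · omega

end Cycle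

section Torus

open Fin.CommRing

variable {n : ℕ}

def torusStair (a b : Fin (n + 2)) (j : ℕ) : Fin (n + 2) × Fin (n + 2) :=
  (a + (((j + 1) / 2 : ℕ) : Fin (n + 2)), b + ((j / 2 : ℕ) : Fin (n + 2)))

lemma torusStair_adj (a b : Fin (n + 2)) (j : ℕ) :
    (cycleGraph (n + 2) □ cycleGraph (n + 2)).Adj
      (torusStair a b j) (torusStair a b (j + 1)) := by
  rcases Nat.even_or_odd' j with ⟨i, rfl | rfl⟩
  · rw [torusStair, torusStair, show (2 * i + 1) / 2 = i by omega,
      show (2 * i + 1 + 1) / 2 = i + 1 by omega, show 2 * i / 2 = i by omega]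
    refine boxProd_adj.2 (Or.inl ⟨?_, rfl⟩)
    simpa [add_assoc] using cycleGraph_adj_add_one (a + (i : Fin (n + 2)))
  · rw [torusStair, torusStair, show (2 * i + 1 + 1) / 2 = i + 1 by omega,
      show (2 * i + 1 + 1 + 1) / 2 = i + 1 by omega, show (2 * i + 1) / 2 = i by omega]
    refine boxProd_adj.2 (Or.inr ⟨?_, rfl⟩)
    simpa [add_assoc] using cycleGraph_adj_add_one (b + (i : Fin (n + 2)))

lemma torus_dist_le (x y : Fin (n + 2) × Fin (n + 2)) :
    (cycleGraph (n + 2) □ cycleGraph (n + 2)).dist x y ≤ n + 2 := by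
  have hC : (cycleGraph (n + 2)).Connected := cycleGraph_connected
  rw [hC.dist_boxProd hC]
  have := cycleGraph_dist_le_half x.1 y.1
  have := cycleGraph_dist_le_half x.2 y.2
  omega

lemma isIsoPathSet_torusStair {k : ℕ} (hk : 2 * k ≤ n) (a b : Fin (n + 2)) :
    IsIsoPathSet (cycleGraph (n + 2) □ cycleGraph (n + 2))
      (range fun j : Fin (2 * k + 1 + 1) => torusStair a b j) := by
  have hC : (cycleGraph (n + 2)).Connected := cycleGraph_connected
  refine isIsoPathSet_range_of_le_dist (torusStair_adj a b) ?_
  rw [hC.dist_boxProd hC]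
  simp only [torusStair, show (2 * k + 1 + 1) / 2 = k + 1 by omega,
    show (2 * k + 1) / 2 = k by omega, zero_add, Nat.reduceDiv, Nat.cast_zero, add_zero]
  rw [cycleGraph_dist_add_natCast a (by omega), cycleGraph_dist_add_natCast b (by omega)]
  omega

/-- Staircase `(i, h)` starts at `(2i + h(k + 1), h(k + 1))`; in the coordinates `(x - y, y)` it
fills the box `{2i, 2i + 1} × [h(k + 1), h(k + 1) + k]`. -/
def torusTiling (k : ℕ) :
    (Fin (k + 1) × Fin 2) × Fin (2 * k + 1 + 1) → Fin (2 * k + 2) × Fin (2 * k + 2) :=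
  fun q => torusStair ((2 * q.1.1.val + q.1.2.val * (k + 1) : ℕ) : Fin (2 * k + 2))
    ((q.1.2.val * (k + 1) : ℕ) : Fin (2 * k + 2)) q.2

lemma torusTiling_surjective (k : ℕ) : Surjective (torusTiling k) := by
  rintro ⟨x, y⟩
  obtain ⟨h, t, ht, hy⟩ : ∃ h : Fin 2, ∃ t, t ≤ k ∧ y.val = h.val * (k + 1) + t := by
    by_cases hlt : y.val < k + 1
    · exact ⟨0, y.val, by omega, by simp⟩
    · exact ⟨1, y.val - (k + 1), by omega, by simp; omega⟩
  set d := (x - y).val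
  have hdlt : d < 2 * k + 2 := (x - y).isLt
  refine ⟨((⟨d / 2, by omega⟩, h), ⟨2 * t + d % 2, by omega⟩), Prod.ext ?_ ?_⟩
  · simp only [torusTiling, torusStair]
    rw [← Nat.cast_add,
      show 2 * (d / 2) + h.val * (k + 1) + (2 * t + d % 2 + 1) / 2 = d + y.val by omega,
      Nat.cast_add, Fin.cast_val_eq_self, Fin.cast_val_eq_self, sub_add_cancel]
  · simp only [torusTiling, torusStair]
    rw [← Nat.cast_add,
      show h.val * (k + 1) + (2 * t + d % 2) / 2 = y.val by omega, Fin.cast_val_eq_self]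

lemma isIsoPathSet_range_torusTiling (k : ℕ) (q : Fin (k + 1) × Fin 2) :
    IsIsoPathSet (cycleGraph (2 * k + 2) □ cycleGraph (2 * k + 2))
      (range (curry (torusTiling k) q)) :=
  isIsoPathSet_torusStair le_rfl ((2 * q.1.val + q.2.val * (k + 1) : ℕ) : Fin (2 * k + 2))
    ((q.2.val * (k + 1) : ℕ) : Fin (2 * k + 2))

lemma card_torusTiling_domain (k : ℕ) :
    Fintype.card ((Fin (k + 1) × Fin 2) × Fin (2 * k + 1 + 1)) =
      Fintype.card (Fin (2 * k + 2) × Fin (2 * k + 2)) := by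
  simp only [Fintype.card_prod, Fintype.card_fin]
  ring

end Torus

theorem stmt_13 (r : ℕ) (hr : 3 ≤ r) (heven : Even r) :
    ipCover (cycleGraph r □ cycleGraph r) = r ∧
      ipPartition (cycleGraph r □ cycleGraph r) = r := by
  obtain ⟨k, rfl⟩ : ∃ k, r = 2 * k + 2 := by
    obtain ⟨m, rfl⟩ := heven
    exact ⟨m - 1, by omega⟩
  have hΨ := (Fintype.bijective_iff_surjective_and_card _).2
    ⟨torusTiling_surjective k, card_torusTiling_domain k⟩
  have hupper : ipPartition (cycleGraph (2 * k + 2) □ cycleGraph (2 * k + 2)) ≤ 2 * k + 2 := by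
    have := ipPartition_le_card _ (isIsoPathSet_range_torusTiling k)
      hΨ.2.iUnion_range_curry_eq_univ hΨ.1.pairwise_disjoint_range_curry
    simp only [Fintype.card_prod, Fintype.card_fin] at this
    omega
  have hlower : 2 * k + 2 ≤ ipCover (cycleGraph (2 * k + 2) □ cycleGraph (2 * k + 2)) := by
    have := card_le_ipCover_mul (G := cycleGraph (2 * k + 2) □ cycleGraph (2 * k + 2))
      torus_dist_le
    simp only [Fintype.card_prod, Fintype.card_fin] at this
    nlinarith
  have := ipCover_le_ipPartition (G := cycleGraph (2 * k + 2) □ cycleGraph (2 * k + 2))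
  omega
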